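/- arXiv:1508.06351 — 2 statements merged into one kernel-verified Lean document; each statement's English description precedes it below -/
import Mathlib

section
/- Let V be a ℤ₊-graded vertex algebra and let O(V) be the span of elements u ∘ v = Res_z Y(u,z)v (1+z)^{wt u} / z² for homogeneous u and arbitrary v. Define u ∗ v = Res_z Y(u,z)v (1+z)^{wt u}/z. Then for any admissible V-module M = ⊕_{n≥0} M(n) and homogeneous a, b ∈ V, the zero-mode operator o(a) = a_{wt a − 1} preserves M(0), and on M(0) the identities o(a)o(b) = o(a ∗ b) and o(c) = 0 for all c ∈ O(V) hold; consequently M(0) is a module over Zhu's algebra A(V) = V/O(V). -/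
noncomputable section

open scoped BigOperators

/-- The generalized binomial coefficient `C(n, k)` for `n : ℤ`, `k : ℕ`, valued in `ℂ`. -/
def zchoose (n : ℤ) (k : ℕ) : ℂ :=
  (∏ i ∈ Finset.range k, ((n : ℂ) - (i : ℂ))) / (k.factorial : ℂ)

/-- A vertex algebra over `ℂ`: a state-field correspondence given by modes
`mode u n : V →ₗ[ℂ] V` (the coefficient `u_n` of `Y(u,z) = ∑ u_n z^{-n-1}`), a vacuum `𝟙`
with `Y(𝟙,z) = id`, creation property, truncation, and the Jacobi identity in the
equivalent form of the Borcherds identity on modes. -/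
structure VertexAlgebra (V : Type*) [AddCommGroup V] [Module ℂ V] where
  mode : V →ₗ[ℂ] ℤ → V →ₗ[ℂ] V
  vacuum : V
  vacuum_mode : ∀ (n : ℤ) (v : V), mode vacuum n v = if n = -1 then v else 0
  creation : ∀ u : V, mode u (-1) vacuum = u
  creation_nonneg : ∀ (u : V) (n : ℤ), 0 ≤ n → mode u n vacuum = 0
  truncation : ∀ u v : V, ∃ N : ℕ, ∀ n : ℕ, N ≤ n → mode u (n : ℤ) v = 0
  borcherds : ∀ (u v w : V) (p q r : ℤ),
    ∑ᶠ i : ℕ, zchoose p i • mode (mode u (r + (i : ℤ)) v) (p + q - (i : ℤ)) w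
      = ∑ᶠ i : ℕ, ((-1 : ℂ) ^ i * zchoose r i) •
          (mode u (p + r - (i : ℤ)) (mode v (q + (i : ℤ)) w)
            - ((-1 : ℂ) ^ r) • mode v (q + r - (i : ℤ)) (mode u (p + (i : ℤ)) w))

/-- A `ℤ₊`-graded vertex algebra: `V = ⊕_{n ≥ 0} V_n` with `dim V_0 = 1`, vacuum of
weight `0`, and `u_m w ∈ V_{i+j-m-1}` for `u ∈ V_i`, `w ∈ V_j` (the supremum below
being `⊥` when `i + j - m - 1 < 0`). -/
structure GradedVertexAlgebra (V : Type*) [AddCommGroup V] [Module ℂ V]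
    extends VertexAlgebra V where
  grade : ℕ → Submodule ℂ V
  decomp : DirectSum.Decomposition grade
  vacuum_mem : vacuum ∈ grade 0
  grade_zero_dim : Module.finrank ℂ (grade 0) = 1
  mode_grade : ∀ (i j : ℕ) (m : ℤ) (u w : V), u ∈ grade i → w ∈ grade j →
    mode u m w ∈ ⨆ (k : ℕ) (_ : (k : ℤ) = (i : ℤ) + (j : ℤ) - m - 1), grade k

namespace GradedVertexAlgebra

variable {V : Type*} [AddCommGroup V] [Module ℂ V]

/-- `V_+ = ⊕_{n ≥ 1} V_n`. -/
def Vplus (W : GradedVertexAlgebra V) : Submodule ℂ V :=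
  ⨆ n : {n : ℕ // 1 ≤ n}, W.grade n

/-- `C_1(V)`: the span of all `u_{-1}v` and `u_{-2}𝟙` for `u, v ∈ V_+`. -/
def C1 (W : GradedVertexAlgebra V) : Submodule ℂ V :=
  Submodule.span ℂ
    ({x | ∃ u ∈ W.Vplus, ∃ v ∈ W.Vplus, x = W.mode u (-1) v} ∪
     {x | ∃ u ∈ W.Vplus, x = W.mode u (-2) W.vacuum})

/-- Zhu's product `u ∗ v = Res_z Y(u,z)v (1+z)^k / z = ∑_i C(k,i) u_{i-1} v` for `u`
homogeneous of weight `k`. -/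
def starH (W : GradedVertexAlgebra V) (k : ℕ) (u v : V) : V :=
  ∑ i ∈ Finset.range (k + 1), (k.choose i : ℂ) • W.mode u ((i : ℤ) - 1) v

/-- `u ∘ v = Res_z Y(u,z)v (1+z)^k / z² = ∑_i C(k,i) u_{i-2} v` for `u` homogeneous of
weight `k`. -/
def circH (W : GradedVertexAlgebra V) (k : ℕ) (u v : V) : V :=
  ∑ i ∈ Finset.range (k + 1), (k.choose i : ℂ) • W.mode u ((i : ℤ) - 2) v

/-- `O(V)`: the span of all `u ∘ v` for homogeneous `u` and arbitrary `v`. -/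
def O (W : GradedVertexAlgebra V) : Submodule ℂ V :=
  Submodule.span ℂ {x | ∃ (k : ℕ) (u v : V), u ∈ W.grade k ∧ x = W.circH k u v}

/-- The homogeneous component of weight `k` of a vector. -/
noncomputable def component (W : GradedVertexAlgebra V) (k : ℕ) (v : V) : V :=
  letI := W.decomp
  ((DirectSum.decompose W.grade v) k : V)

/-- Zhu's product `∗` on all of `V`, extended linearly from homogeneous first arguments. -/
noncomputable def gstar (W : GradedVertexAlgebra V) (u v : V) : V :=
  ∑ᶠ k : ℕ, W.starH k (W.component k u) v

end GradedVertexAlgebra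

/-- An admissible module over a `ℤ₊`-graded vertex algebra `W`: a `ℤ₊`-graded space
`M = ⊕_{n ≥ 0} M(n)` with a module vertex operator map satisfying `Y_M(𝟙,z) = id`, the
module Jacobi identity (in Borcherds form) and `u_m M(n) ⊆ M(wt u + n - m - 1)`. -/
structure AdmissibleModule {V : Type*} [AddCommGroup V] [Module ℂ V]
    (W : GradedVertexAlgebra V) (M : Type*) [AddCommGroup M] [Module ℂ M] where
  act : V →ₗ[ℂ] ℤ → M →ₗ[ℂ] M
  vacuum_act : ∀ (n : ℤ) (w : M), act W.vacuum n w = if n = -1 then w else 0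
  mtruncation : ∀ (u : V) (w : M), ∃ N : ℕ, ∀ n : ℕ, N ≤ n → act u (n : ℤ) w = 0
  mgrade : ℕ → Submodule ℂ M
  mdecomp : DirectSum.Decomposition mgrade
  act_grade : ∀ (k n : ℕ) (m : ℤ) (u : V) (w : M), u ∈ W.grade k → w ∈ mgrade n →
    act u m w ∈ ⨆ (j : ℕ) (_ : (j : ℤ) = (k : ℤ) + (n : ℤ) - m - 1), mgrade j
  mborcherds : ∀ (u v : V) (w : M) (p q r : ℤ),
    ∑ᶠ i : ℕ, zchoose p i • act (W.mode u (r + (i : ℤ)) v) (p + q - (i : ℤ)) w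
      = ∑ᶠ i : ℕ, ((-1 : ℂ) ^ i * zchoose r i) •
          (act u (p + r - (i : ℤ)) (act v (q + (i : ℤ)) w)
            - ((-1 : ℂ) ^ r) • act v (q + r - (i : ℤ)) (act u (p + (i : ℤ)) w))

lemma zchoose_natCast (k i : ℕ) : zchoose (k : ℤ) i = (k.choose i : ℂ) := by
  unfold zchoose
  push_cast
  rcases le_or_gt i k with h | h
  · have hp : ∏ j ∈ Finset.range i, ((k : ℂ) - (j : ℂ)) = (k.descFactorial i : ℂ) := by
      rw [Nat.descFactorial_eq_prod_range, Nat.cast_prod]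
      refine Finset.prod_congr rfl fun j hj => ?_
      have hj' : j ≤ k := le_trans (Nat.le_of_lt_succ (Nat.lt_succ_of_lt
        (Finset.mem_range.mp hj))) h
      rw [Nat.cast_sub hj']
    rw [hp, Nat.descFactorial_eq_factorial_mul_choose]
    push_cast
    rw [mul_comm]
    exact mul_div_cancel_right₀ _ (by exact_mod_cast i.factorial_ne_zero)
  · have hp : ∏ j ∈ Finset.range i, ((k : ℂ) - (j : ℂ)) = 0 :=
      Finset.prod_eq_zero (Finset.mem_range.mpr h) (by simp)
    rw [hp, Nat.choose_eq_zero_of_lt h, zero_div, Nat.cast_zero]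

lemma zchoose_neg_one (i : ℕ) : zchoose (-1) i = (-1 : ℂ) ^ i := by
  unfold zchoose
  push_cast
  have hp : ∏ j ∈ Finset.range i, ((-1 : ℂ) - (j : ℂ)) = (-1) ^ i * (i.factorial : ℂ) := by
    induction i with
    | zero => simp
    | succ n ih =>
        rw [Finset.prod_range_succ, ih, Nat.factorial_succ]
        push_cast
        ring
  rw [hp]
  exact mul_div_cancel_right₀ _ (by exact_mod_cast i.factorial_ne_zero)

lemma zchoose_zero' (n : ℤ) : zchoose n 0 = 1 := by simp [zchoose]

/-- Key vanishing: if the target degree is negative, the mode acts as zero. -/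
lemma act_vanish {V : Type*} [AddCommGroup V] [Module ℂ V]
    {W : GradedVertexAlgebra V} {M : Type*} [AddCommGroup M] [Module ℂ M]
    (Y : AdmissibleModule W M) {k n : ℕ} {m : ℤ} {u : V} {w : M}
    (hu : u ∈ W.grade k) (hw : w ∈ Y.mgrade n) (h : (k : ℤ) + (n : ℤ) - m - 1 < 0) :
    Y.act u m w = 0 := by
  have H := Y.act_grade k n m u w hu hw
  have hbot : (⨆ (j : ℕ) (_ : (j : ℤ) = (k : ℤ) + (n : ℤ) - m - 1), Y.mgrade j) ≤ ⊥ :=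
    iSup_le fun j => iSup_le fun hj => absurd hj (by omega)
  exact (Submodule.mem_bot ℂ).mp (hbot H)

/-- for an admissible module `M = ⊕ M(n)` and homogeneous `a, b ∈ V`, the
zero-mode `o(a) = a_{wt a - 1}` preserves `M(0)`, and on `M(0)` one has
`o(a)o(b) = o(a ∗ b)` and `o(c) = 0` for `c ∈ O(V)`; hence `M(0)` is an `A(V)`-module. -/
theorem zhu_action_on_top_level {V : Type*} [AddCommGroup V] [Module ℂ V]
    (W : GradedVertexAlgebra V) {M : Type*} [AddCommGroup M] [Module ℂ M]
    (Y : AdmissibleModule W M)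
    (ka kb : ℕ) (a b : V) (ha : a ∈ W.grade ka) (hb : b ∈ W.grade kb)
    (w : M) (hw : w ∈ Y.mgrade 0) :
    -- `o(a)` preserves `M(0)`
    Y.act a ((ka : ℤ) - 1) w ∈ Y.mgrade 0 ∧
    -- `o(a)o(b) = o(a ∗ b)` on `M(0)`
    Y.act a ((ka : ℤ) - 1) (Y.act b ((kb : ℤ) - 1) w)
      = ∑ i ∈ Finset.range (ka + 1), (ka.choose i : ℂ) •
          Y.act (W.mode a ((i : ℤ) - 1) b) ((ka : ℤ) + (kb : ℤ) - (i : ℤ) - 1) w ∧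
    -- `o(c) = 0` on `M(0)` for every spanning element `c = u ∘ v` of `O(V)`
    (∀ (k kv : ℕ) (u v : V), u ∈ W.grade k → v ∈ W.grade kv →
      ∑ i ∈ Finset.range (k + 1), (k.choose i : ℂ) •
        Y.act (W.mode u ((i : ℤ) - 2) v) ((k : ℤ) + (kv : ℤ) - (i : ℤ)) w = 0) := by
  refine ⟨?_, ?_, ?_⟩
  · -- o(a) preserves M(0)
    have H := Y.act_grade ka 0 ((ka : ℤ) - 1) a w ha hw
    have hle : (⨆ (j : ℕ) (_ : (j : ℤ) = (ka : ℤ) + ((0:ℕ) : ℤ) - ((ka : ℤ) - 1) - 1),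
        Y.mgrade j) ≤ Y.mgrade 0 :=
      iSup_le fun j => iSup_le fun hj => by
        obtain rfl : j = 0 := by omega
        exact le_rfl
    exact hle H
  · -- o(a)o(b) = o(a ∗ b) on M(0)
    have B := Y.mborcherds a b w (ka : ℤ) ((kb : ℤ) - 1) (-1)
    have hR : ∑ᶠ i : ℕ, ((-1 : ℂ) ^ i * zchoose (-1) i) •
        (Y.act a ((ka : ℤ) + (-1) - (i : ℤ)) (Y.act b (((kb : ℤ) - 1) + (i : ℤ)) w)
          - ((-1 : ℂ) ^ (-1 : ℤ)) •
            Y.act b (((kb : ℤ) - 1) + (-1) - (i : ℤ)) (Y.act a ((ka : ℤ) + (i : ℤ)) w))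
        = Y.act a ((ka : ℤ) - 1) (Y.act b ((kb : ℤ) - 1) w) := by
      rw [finsum_eq_single _ 0 ?_]
      · have h1 : Y.act a ((ka : ℤ) + ((0:ℕ) : ℤ)) w = 0 := act_vanish Y ha hw (by omega)
        have e1 : (ka : ℤ) + (-1) - ((0:ℕ) : ℤ) = (ka : ℤ) - 1 := by push_cast; ring
        have e2 : ((kb : ℤ) - 1) + ((0:ℕ) : ℤ) = (kb : ℤ) - 1 := by push_cast; ring
        rw [e1, e2, h1]
        simp [zchoose_zero']
      · intro i hi
        have hi1 : 1 ≤ i := Nat.one_le_iff_ne_zero.mpr hi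
        have h1 : Y.act b (((kb : ℤ) - 1) + (i : ℤ)) w = 0 := act_vanish Y hb hw (by omega)
        have h2 : Y.act a ((ka : ℤ) + (i : ℤ)) w = 0 := act_vanish Y ha hw (by omega)
        rw [h1, h2]
        simp
    have hL : ∑ᶠ i : ℕ, zchoose (ka : ℤ) i •
        Y.act (W.mode a ((-1) + (i : ℤ)) b) ((ka : ℤ) + ((kb : ℤ) - 1) - (i : ℤ)) w
        = ∑ i ∈ Finset.range (ka + 1), (ka.choose i : ℂ) •
            Y.act (W.mode a ((i : ℤ) - 1) b) ((ka : ℤ) + (kb : ℤ) - (i : ℤ) - 1) w := by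
      rw [finsum_eq_finset_sum_of_support_subset _ (s := Finset.range (ka + 1)) ?_]
      · refine Finset.sum_congr rfl fun i _ => ?_
        have e1 : (-1 : ℤ) + (i : ℤ) = (i : ℤ) - 1 := by ring
        have e2 : (ka : ℤ) + ((kb : ℤ) - 1) - (i : ℤ) = (ka : ℤ) + (kb : ℤ) - (i : ℤ) - 1 := by
          ring
        rw [e1, e2, zchoose_natCast]
      · intro i hi
        simp only [Function.mem_support] at hi
        by_contra hmem
        simp only [Finset.coe_range, Set.mem_Iio, not_lt] at hmem
        exact hi (by rw [zchoose_natCast, Nat.choose_eq_zero_of_lt (by omega)]; simp)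
    exact ((B.trans hR).symm).trans hL
  · -- o(u ∘ v) = 0 on M(0)
    intro k kv u v hu hv
    have B := Y.mborcherds u v w (k : ℤ) (kv : ℤ) (-2)
    have hR : ∑ᶠ i : ℕ, ((-1 : ℂ) ^ i * zchoose (-2) i) •
        (Y.act u ((k : ℤ) + (-2) - (i : ℤ)) (Y.act v ((kv : ℤ) + (i : ℤ)) w)
          - ((-1 : ℂ) ^ (-2 : ℤ)) •
            Y.act v ((kv : ℤ) + (-2) - (i : ℤ)) (Y.act u ((k : ℤ) + (i : ℤ)) w)) = 0 := by
      refine finsum_eq_zero_of_forall_eq_zero fun i => ?_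
      have h1 : Y.act v ((kv : ℤ) + (i : ℤ)) w = 0 := act_vanish Y hv hw (by omega)
      have h2 : Y.act u ((k : ℤ) + (i : ℤ)) w = 0 := act_vanish Y hu hw (by omega)
      rw [h1, h2]
      simp
    have hL : ∑ᶠ i : ℕ, zchoose (k : ℤ) i •
        Y.act (W.mode u ((-2) + (i : ℤ)) v) ((k : ℤ) + (kv : ℤ) - (i : ℤ)) w
        = ∑ i ∈ Finset.range (k + 1), (k.choose i : ℂ) •
            Y.act (W.mode u ((i : ℤ) - 2) v) ((k : ℤ) + (kv : ℤ) - (i : ℤ)) w := by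
      rw [finsum_eq_finset_sum_of_support_subset _ (s := Finset.range (k + 1)) ?_]
      · refine Finset.sum_congr rfl fun i _ => ?_
        have e1 : (-2 : ℤ) + (i : ℤ) = (i : ℤ) - 2 := by ring
        rw [e1, zchoose_natCast]
      · intro i hi
        simp only [Function.mem_support] at hi
        by_contra hmem
        simp only [Finset.coe_range, Set.mem_Iio, not_lt] at hmem
        exact hi (by rw [zchoose_natCast, Nat.choose_eq_zero_of_lt (by omega)]; simp)
    exact (hL.symm.trans B).trans hR
end
end

section
/- Let V be a C_1-cofinite ℤ₊-graded vertex algebra with C_1-generators u^1, …, u^l (a homogeneous basis of a graded complement of C_1(V) in V_+). Then Zhu's algebra A(V) is generated as an associative algebra by the images o(u^1), …, o(u^l) of the generators. -/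
noncomputable section

open scoped BigOperators

/-- Iterated Zhu `∗`-products of the generators:
`word [i₁,…,i_r] = o(u^{i₁}) ∗ ⋯ ∗ o(u^{i_r}) ∗ 𝟙` computed upstairs in `V`. -/
def word {V : Type*} [AddCommGroup V] [Module ℂ V]
    (W : GradedVertexAlgebra V) {l : ℕ} (u : Fin l → V) (wt : Fin l → ℕ) :
    List (Fin l) → V
  | [] => W.vacuum
  | i :: t => W.starH (wt i) (u i) (word W u wt t)


namespace ZC
open Polynomial


lemma fact_ne (k : ℕ) : (k.factorial : ℂ) ≠ 0 :=
  Nat.cast_ne_zero.2 (Nat.factorial_ne_zero k)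

lemma nat_add_one_ne (k : ℕ) : ((k:ℂ)+1) ≠ 0 := Nat.cast_add_one_ne_zero k

lemma zchoose_eq (n : ℤ) (k : ℕ) :
    zchoose n k * (k.factorial : ℂ) = ∏ i ∈ Finset.range k, ((n : ℂ) - (i : ℂ)) := by
  unfold zchoose; rw [div_mul_cancel₀ _ (fact_ne k)]

lemma zchoose_zero (n : ℤ) : zchoose n 0 = 1 := by simp [zchoose]

lemma zchoose_one (n : ℤ) : zchoose n 1 = (n : ℂ) := by simp [zchoose]

lemma zchoose_nat_zero_pos {k : ℕ} (hk : 1 ≤ k) : zchoose 0 k = 0 := by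
  have h : (∏ i ∈ Finset.range k, (((0:ℤ) : ℂ) - (i : ℂ))) = 0 := by
    apply Finset.prod_eq_zero (Finset.mem_range.2 hk)
    simp
  unfold zchoose
  rw [h, zero_div]

lemma zchoose_neg_one (k : ℕ) : zchoose (-1) k = (-1 : ℂ) ^ k := by
  induction k with
  | zero => simp [zchoose]
  | succ k ih =>
    have h1 : (∏ i ∈ Finset.range (k+1), (((-1:ℤ) : ℂ) - (i : ℂ)))
        = (∏ i ∈ Finset.range k, (((-1:ℤ) : ℂ) - (i : ℂ))) * (((-1:ℤ):ℂ) - (k:ℂ)) :=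
      Finset.prod_range_succ _ _
    have ihe := zchoose_eq (-1) k
    rw [ih] at ihe
    have hf : ((k+1).factorial : ℂ) = (k.factorial : ℂ) * ((k:ℂ)+1) := by
      push_cast [Nat.factorial_succ]; ring
    unfold zchoose
    rw [h1, ← ihe, hf]
    rw [div_eq_iff (by exact mul_ne_zero (fact_ne k) (nat_add_one_ne k))]
    push_cast
    ring

lemma zchoose_pascal (n : ℤ) (k : ℕ) :
    zchoose n (k+1) = zchoose (n-1) (k+1) + zchoose (n-1) k := by
  have key : ∀ m : ℤ, ∀ j : ℕ, ((m:ℂ) - (j:ℂ)) = (((m - 1 : ℤ)) : ℂ) - ((j:ℂ) - 1) := by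
    intro m j; push_cast; ring
  have hP1 : (∏ i ∈ Finset.range (k+1), ((n : ℂ) - (i : ℂ)))
      = (n : ℂ) * ∏ i ∈ Finset.range k, (((n - 1 : ℤ) : ℂ) - (i : ℂ)) := by
    rw [Finset.prod_range_succ']
    have hb : ∀ x:ℕ, ((n:ℂ) - (((x+1):ℕ):ℂ)) = (((n-1:ℤ)):ℂ) - (x:ℂ) := by
      intro x; push_cast; ring
    simp only [hb]
    push_cast
    ring
  have hP2 : (∏ i ∈ Finset.range (k+1), (((n-1 : ℤ) : ℂ) - (i : ℂ)))
      = (∏ i ∈ Finset.range k, (((n - 1 : ℤ) : ℂ) - (i : ℂ))) * (((n-1:ℤ):ℂ) - (k:ℂ)) :=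
    Finset.prod_range_succ _ _
  have hf : ((k+1).factorial : ℂ) = (k.factorial : ℂ) * ((k:ℂ)+1) := by
    push_cast [Nat.factorial_succ]; ring
  have e1 := zchoose_eq n (k+1)
  have e2 := zchoose_eq (n-1) (k+1)
  have e3 := zchoose_eq (n-1) k
  rw [hP1, ← e3] at e1
  rw [hP2, ← e3] at e2
  rw [hf] at e1 e2
  have hfk := fact_ne k
  have hk1 := nat_add_one_ne k
  have goal' : zchoose n (k+1) * ((k.factorial : ℂ) * ((k:ℂ)+1))
      = (zchoose (n-1) (k+1) + zchoose (n-1) k) * ((k.factorial : ℂ) * ((k:ℂ)+1)) := by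
    rw [e1, add_mul, e2]
    push_cast
    ring
  exact mul_right_cancel₀ (mul_ne_zero hfk hk1) goal'

/-- `L_{α,t} = ∑_i C(α,i) C(i-1,t) X^i`. -/
def Lp (α t : ℕ) : Polynomial ℂ :=
  ∑ i ∈ Finset.range (α+1), Polynomial.C ((α.choose i : ℂ) * zchoose ((i:ℤ)-1) t) * X ^ i

/-- `R_{α,t} = ∑_s (-1)^{t-s} C(α,s) X^s (1+X)^{t+1-s}`. -/
def Rp (α t : ℕ) : Polynomial ℂ :=
  ∑ s ∈ Finset.range (t+1),
    Polynomial.C ((-1 : ℂ)^(t-s) * (α.choose s : ℂ)) * X ^ s * (1 + X) ^ (t+1-s)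

lemma one_add_X_pow (n : ℕ) :
    ((1 + X : Polynomial ℂ)) ^ n
      = ∑ i ∈ Finset.range (n+1), Polynomial.C ((n.choose i : ℂ)) * X ^ i := by
  rw [add_comm, add_pow]
  apply Finset.sum_congr rfl
  intro i _
  rw [one_pow]
  push_cast
  rw [Polynomial.C_eq_natCast]
  ring

lemma Lp_zero_left (t : ℕ) : Lp 0 t = Polynomial.C ((-1:ℂ)^t) := by
  simp [Lp, zchoose_neg_one]

lemma Lp_zero_right (α : ℕ) : Lp α 0 = (1 + X) ^ α := by
  rw [one_add_X_pow]
  apply Finset.sum_congr rfl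
  intro i _
  rw [zchoose_zero, mul_one]

lemma Rp_zero_right (α : ℕ) : Rp α 0 = 1 + X := by
  simp [Rp]

lemma Lp_succ (α t : ℕ) (ht : 1 ≤ t) :
    Lp (α+1) t = (1 + X) * Lp α t + X * Lp α (t-1) := by
  obtain ⟨t', rfl⟩ : ∃ t', t = t' + 1 := ⟨t - 1, by omega⟩
  rw [Nat.add_sub_cancel]
  have hsplit : Lp (α+1) (t'+1)
      = (∑ i ∈ Finset.range (α+1+1), Polynomial.C ((α.choose i : ℂ) * zchoose ((i:ℤ)-1) (t'+1)) * X ^ i)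
        + ∑ i ∈ Finset.range (α+1+1), Polynomial.C ((α.choose (i-1) : ℂ) * (if i = 0 then 0 else zchoose ((i:ℤ)-1) (t'+1))) * X ^ i := by
    unfold Lp
    rw [← Finset.sum_add_distrib]
    apply Finset.sum_congr rfl
    intro i _
    rcases i with _ | j
    · simp
    · rw [← add_mul, ← Polynomial.C_add]
      congr 2
      have : ((α+1).choose (j+1) : ℂ) = (α.choose (j+1) : ℂ) + (α.choose j : ℂ) := by
        rw [Nat.choose_succ_succ']
        push_cast; ring
      rw [this]
      simp
      ring
  -- first sum: extend/truncate to range (α+1) since choose α (α+1) = 0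
  have h1 : (∑ i ∈ Finset.range (α+1+1), Polynomial.C ((α.choose i : ℂ) * zchoose ((i:ℤ)-1) (t'+1)) * X ^ i)
      = Lp α (t'+1) := by
    unfold Lp
    rw [Finset.sum_range_succ]
    simp [Nat.choose_succ_self]
  -- second sum: shift index, apply Pascal
  have h2 : (∑ i ∈ Finset.range (α+1+1), Polynomial.C ((α.choose (i-1) : ℂ) * (if i = 0 then 0 else zchoose ((i:ℤ)-1) (t'+1))) * X ^ i)
      = X * Lp α (t'+1) + X * Lp α t' := by
    rw [Finset.sum_range_succ']
    simp only [if_neg (Nat.succ_ne_zero _), Nat.add_sub_cancel]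
    have hb : ∀ j : ℕ, zchoose (((j+1:ℕ):ℤ)-1) (t'+1)
        = zchoose ((j:ℤ)-1) (t'+1) + zchoose ((j:ℤ)-1) t' := by
      intro j
      have := zchoose_pascal ((j:ℤ)) t'
      push_cast
      rw [add_sub_cancel_right]
      convert this using 3 <;> push_cast <;> ring
    have : ∀ j ∈ Finset.range (α+1),
        Polynomial.C ((α.choose j : ℂ) * zchoose (((j+1:ℕ):ℤ)-1) (t'+1)) * X ^ (j+1)
        = X * (Polynomial.C ((α.choose j : ℂ) * zchoose ((j:ℤ)-1) (t'+1)) * X ^ j)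
          + X * (Polynomial.C ((α.choose j : ℂ) * zchoose ((j:ℤ)-1) t') * X ^ j) := by
      intro j _
      rw [hb j]
      rw [mul_add, Polynomial.C_add]
      ring
    rw [Finset.sum_congr rfl this, Finset.sum_add_distrib]
    unfold Lp
    rw [Finset.mul_sum, Finset.mul_sum]
    simp
  rw [hsplit, h1, h2]
  ring

lemma Rp_succ (α t : ℕ) (ht : 1 ≤ t) :
    Rp (α+1) t = Rp α t + X * Rp α (t-1) := by
  obtain ⟨t', rfl⟩ : ∃ t', t = t' + 1 := ⟨t - 1, by omega⟩
  rw [Nat.add_sub_cancel]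
  have hsplit : Rp (α+1) (t'+1)
      = (∑ s ∈ Finset.range (t'+1+1), Polynomial.C ((-1 : ℂ)^(t'+1-s) * (α.choose s : ℂ)) * X ^ s * (1 + X) ^ (t'+1+1-s))
        + ∑ s ∈ Finset.range (t'+1+1), Polynomial.C ((-1 : ℂ)^(t'+1-s) * (if s = 0 then 0 else (α.choose (s-1) : ℂ))) * X ^ s * (1 + X) ^ (t'+1+1-s) := by
    unfold Rp
    rw [← Finset.sum_add_distrib]
    apply Finset.sum_congr rfl
    intro s _
    rcases s with _ | j
    · simp
    · rw [← add_mul, ← add_mul, ← Polynomial.C_add]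
      congr 3
      have : ((α+1).choose (j+1) : ℂ) = (α.choose (j+1) : ℂ) + (α.choose j : ℂ) := by
        rw [Nat.choose_succ_succ']
        push_cast; ring
      rw [this]
      simp
      ring
  have h1 : (∑ s ∈ Finset.range (t'+1+1), Polynomial.C ((-1 : ℂ)^(t'+1-s) * (α.choose s : ℂ)) * X ^ s * (1 + X) ^ (t'+1+1-s))
      = Rp α (t'+1) := rfl
  have h2 : (∑ s ∈ Finset.range (t'+1+1), Polynomial.C ((-1 : ℂ)^(t'+1-s) * (if s = 0 then 0 else (α.choose (s-1) : ℂ))) * X ^ s * (1 + X) ^ (t'+1+1-s))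
      = X * Rp α t' := by
    rw [Finset.sum_range_succ']
    simp only [if_neg (Nat.succ_ne_zero _), Nat.add_sub_cancel]
    unfold Rp
    rw [Finset.mul_sum]
    simp only [if_neg, Nat.succ_sub_succ_eq_sub]
    have : ∀ j ∈ Finset.range (t'+1),
        Polynomial.C ((-1 : ℂ)^(t'-j) * (α.choose j : ℂ)) * X ^ (j+1) * (1 + X) ^ (t'+1-j)
        = X * (Polynomial.C ((-1 : ℂ)^(t'-j) * (α.choose j : ℂ)) * X ^ j * (1 + X) ^ (t'+1-j)) := by
      intro j _
      ring
    rw [Finset.sum_congr rfl this]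
    simp
  rw [hsplit, h1, h2]

theorem cpi (α : ℕ) : ∀ t : ℕ, (1 + X) ^ (t+1) * Lp α t = (1 + X) ^ α * Rp α t := by
  induction α with
  | zero =>
    intro t
    rw [Lp_zero_left]
    unfold Rp
    rw [pow_zero, one_mul]
    have : ∀ s ∈ Finset.range (t+1),
        Polynomial.C ((-1 : ℂ)^(t-s) * ((0:ℕ).choose s : ℂ)) * X ^ s * (1 + X) ^ (t+1-s)
        = if s = 0 then Polynomial.C ((-1:ℂ)^t) * (1+X)^(t+1) else 0 := by
      intro s _
      rcases s with _ | j
      · simp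
      · simp [Nat.choose_eq_zero_of_lt (Nat.succ_pos j)]
    rw [Finset.sum_congr rfl this, Finset.sum_ite_eq' (Finset.range (t+1)) 0]
    simp [mul_comm]
  | succ α ih =>
    intro t
    rcases Nat.eq_zero_or_pos t with rfl | ht
    · rw [Lp_zero_right, Rp_zero_right]
      ring
    · rw [Lp_succ α t ht, Rp_succ α t ht]
      obtain ⟨t', rfl⟩ : ∃ t', t = t' + 1 := ⟨t - 1, by omega⟩
      rw [Nat.add_sub_cancel]
      have i1 := ih (t'+1)
      have i2 := ih t'
      calc (1+X)^(t'+1+1) * ((1 + X) * Lp α (t'+1) + X * Lp α t')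
          = (1+X) * ((1+X)^(t'+1+1) * Lp α (t'+1)) + X * (1+X) * ((1+X)^(t'+1) * Lp α t') := by ring
        _ = (1+X) * ((1+X)^α * Rp α (t'+1)) + X * (1+X) * ((1+X)^α * Rp α t') := by rw [i1, i2]
        _ = (1+X)^(α+1) * (Rp α (t'+1) + X * Rp α t') := by ring

lemma one_add_X_ne : (1 + X : Polynomial ℂ) ≠ 0 := by
  intro h
  have := congrArg (Polynomial.eval 0) h
  simp at this

theorem cpi' (α β t γ : ℕ) (h : γ + (t+1) = α + β) :
    (1 + X) ^ β * Lp α t = (1 + X) ^ γ * Rp α t := by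
  have key := cpi α t
  have h2 : (1+X)^(t+1) * ((1 + X) ^ β * Lp α t) = (1+X)^(t+1) * ((1 + X) ^ γ * Rp α t) := by
    calc (1+X)^(t+1) * ((1 + X) ^ β * Lp α t) = (1+X)^β * ((1+X)^(t+1) * Lp α t) := by ring
      _ = (1+X)^β * ((1+X)^α * Rp α t) := by rw [key]
      _ = (1+X)^(β+α) * Rp α t := by ring
      _ = (1+X)^(γ+(t+1)) * Rp α t := by rw [show β + α = γ + (t+1) by omega]
      _ = (1+X)^(t+1) * ((1 + X) ^ γ * Rp α t) := by ring
  exact mul_left_cancel₀ (pow_ne_zero _ one_add_X_ne) h2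


end ZC

namespace ZhuAux
open ZC

variable {V : Type*} [AddCommGroup V] [Module ℂ V] (W : GradedVertexAlgebra V)

/-- The mode map, linear in the state. -/
def modeL (n : ℤ) (y : V) : V →ₗ[ℂ] V where
  toFun d := W.mode d n y
  map_add' a b := by show W.mode (a + b) n y = W.mode a n y + W.mode b n y; rw [map_add]; rfl
  map_smul' c a := by show W.mode (c • a) n y = c • W.mode a n y; rw [map_smul]; rfl

lemma mode_zero_left (n : ℤ) (y : V) : W.mode 0 n y = 0 := by
  rw [map_zero]; rfl

lemma trunc' (a b : V) : ∃ N : ℕ, ∀ n : ℤ, (N:ℤ) ≤ n → W.mode a n b = 0 := by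
  obtain ⟨N, hN⟩ := W.truncation a b
  refine ⟨N, fun n hn => ?_⟩
  have h0 : 0 ≤ n := le_trans (Int.ofNat_nonneg N) hn
  obtain ⟨m, rfl⟩ := Int.eq_ofNat_of_zero_le h0
  exact hN m (by exact_mod_cast hn)

lemma finsum_range {M : Type*} [AddCommMonoid M] (f : ℕ → M) (N : ℕ)
    (h : ∀ i, N ≤ i → f i = 0) : (∑ᶠ i, f i) = ∑ i ∈ Finset.range N, f i := by
  apply finsum_eq_sum_of_support_subset
  intro i hi
  simp only [Finset.coe_range, Set.mem_Iio]
  by_contra hc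
  exact hi (h i (by omega))

lemma mem_grade_mode {i j : ℕ} {m : ℤ} {a w : V} (ha : a ∈ W.grade i) (hw : w ∈ W.grade j)
    {k : ℕ} (hk : (i:ℤ) + j - m - 1 = k) : W.mode a m w ∈ W.grade k := by
  have h := W.mode_grade i j m a w ha hw
  have hle : (⨆ (k' : ℕ) (_ : (k' : ℤ) = (i : ℤ) + (j : ℤ) - m - 1), W.grade k') ≤ W.grade k := by
    apply iSup_le; intro k'; apply iSup_le; intro hk'
    have : k' = k := by omega
    rw [this]
  exact hle h

lemma mode_eq_zero_of_neg {i j : ℕ} {m : ℤ} {a w : V} (ha : a ∈ W.grade i) (hw : w ∈ W.grade j)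
    (hneg : (i:ℤ) + j - m - 1 < 0) : W.mode a m w = 0 := by
  have h := W.mode_grade i j m a w ha hw
  have hle : (⨆ (k' : ℕ) (_ : (k' : ℤ) = (i : ℤ) + (j : ℤ) - m - 1), W.grade k') ≤ ⊥ := by
    apply iSup_le; intro k'; apply iSup_le; intro hk'
    exact absurd hk' (by omega)
  simpa using hle h

/-- The weight-`k` projection as a linear map. -/
def compL (k : ℕ) : V →ₗ[ℂ] V :=
  letI := W.decomp
  (W.grade k).subtype ∘ₗ (DirectSum.component ℂ ℕ (fun i => ↥(W.grade i)) k) ∘ₗ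
    (DirectSum.decomposeLinearEquiv W.grade).toLinearMap

lemma compL_apply (k : ℕ) (x : V) : compL W k x = W.component k x := rfl

lemma compL_mem (k : ℕ) (x : V) : compL W k x ∈ W.grade k := by
  letI := W.decomp
  exact ((DirectSum.decompose W.grade x) k).2

lemma compL_same {k : ℕ} {x : V} (hx : x ∈ W.grade k) : compL W k x = x := by
  letI := W.decomp
  exact DirectSum.decompose_of_mem_same W.grade hx

lemma compL_ne {j k : ℕ} {x : V} (hx : x ∈ W.grade j) (hjk : j ≠ k) : compL W k x = 0 := by
  letI := W.decomp
  exact DirectSum.decompose_of_mem_ne W.grade hx hjk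

lemma sum_compL (x : V) : ∃ s : Finset ℕ, (∑ β ∈ s, compL W β x) = x := by
  classical
  letI := W.decomp
  exact ⟨(DirectSum.decompose W.grade x).support, DirectSum.sum_support_decompose W.grade x⟩

lemma vplus_comp_zero {x : V} (hx : x ∈ W.Vplus) : compL W 0 x = 0 := by
  have hle : W.Vplus ≤ LinearMap.ker (compL W 0) := by
    apply iSup_le
    rintro ⟨n, hn⟩
    intro y hy
    simp only [LinearMap.mem_ker]
    exact compL_ne W hy (Nat.one_le_iff_ne_zero.mp hn)
  exact hle hx

/-- Translation: `(a_{-2}𝟙)_m = -m a_{m-1}`. -/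
lemma Tmode (a w : V) (m : ℤ) :
    W.mode (W.mode a (-2) W.vacuum) m w = ((-m : ℤ) : ℂ) • W.mode a (m-1) w := by
  have B := W.borcherds a W.vacuum w (m+1) (-1) (-2)
  have hL : (∑ᶠ i : ℕ, zchoose (m+1) i •
        W.mode (W.mode a (-2 + (i:ℤ)) W.vacuum) (m+1 + -1 - (i:ℤ)) w)
      = W.mode (W.mode a (-2) W.vacuum) m w + ((m:ℂ)+1) • W.mode a (m-1) w := by
    rw [finsum_range _ 2 (by
      intro i hi
      rw [W.creation_nonneg a (-2 + (i:ℤ)) (by omega), mode_zero_left, smul_zero])]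
    rw [Finset.sum_range_succ, Finset.sum_range_one]
    congr 1
    · rw [ZC.zchoose_zero, one_smul]
      norm_num
    · rw [ZC.zchoose_one]
      have e1 : (-2 + ((1:ℕ):ℤ)) = -1 := by norm_num
      have e2 : (m + 1 + -1 - ((1:ℕ):ℤ)) = m - 1 := by norm_num
      rw [e1, e2, W.creation a]
      push_cast
      ring_nf
  have hR : (∑ᶠ i : ℕ, ((-1 : ℂ) ^ i * zchoose (-2) i) •
        (W.mode a (m+1 + -2 - (i:ℤ)) (W.mode W.vacuum (-1 + (i:ℤ)) w)
          - ((-1 : ℂ) ^ (-2 : ℤ)) • W.mode W.vacuum (-1 + -2 - (i:ℤ)) (W.mode a (m+1 + (i:ℤ)) w)))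
      = W.mode a (m-1) w := by
    rw [finsum_range _ 1 (by
      intro i hi
      have h1 : W.mode W.vacuum (-1 + (i:ℤ)) w = 0 := by
        rw [W.vacuum_mode]; rw [if_neg (by omega)]
      have h2 : W.mode W.vacuum (-1 + -2 - (i:ℤ)) (W.mode a (m+1 + (i:ℤ)) w) = 0 := by
        rw [W.vacuum_mode]; rw [if_neg (by omega)]
      rw [h1, h2, (W.mode a _).map_zero, smul_zero, sub_zero, smul_zero])]
    rw [Finset.sum_range_one]
    have h1 : W.mode W.vacuum (-1 + ((0:ℕ):ℤ)) w = w := by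
      rw [W.vacuum_mode]; rw [if_pos (by norm_num)]
    have h2 : W.mode W.vacuum (-1 + -2 - ((0:ℕ):ℤ)) (W.mode a (m+1 + ((0:ℕ):ℤ)) w) = 0 := by
      rw [W.vacuum_mode]; rw [if_neg (by omega)]
    rw [h1, h2, smul_zero, sub_zero, ZC.zchoose_zero]
    have e1 : m + 1 + -2 = m - 1 := by ring
    norm_num [e1]
  rw [hL, hR] at B
  have h3 : W.mode (W.mode a (-2) W.vacuum) m w
      = W.mode a (m-1) w - ((m:ℂ)+1) • W.mode a (m-1) w := eq_sub_iff_add_eq.mpr B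
  rw [h3]
  have h4 : ((-m : ℤ) : ℂ) = 1 - ((m:ℂ)+1) := by push_cast; ring
  rw [h4, sub_smul, one_smul]

/-- Commutator formula. -/
lemma comm_mode (a b c : V) (m n : ℤ) (N : ℕ) (hN : ∀ t : ℕ, N ≤ t → W.mode a t b = 0) :
    W.mode a m (W.mode b n c)
      = W.mode b n (W.mode a m c)
        + ∑ t ∈ Finset.range N, zchoose m t • W.mode (W.mode a t b) (m + n - t) c := by
  have B := W.borcherds a b c m n 0
  have hL : (∑ᶠ i : ℕ, zchoose m i • W.mode (W.mode a (0 + (i:ℤ)) b) (m + n - (i:ℤ)) c)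
      = ∑ t ∈ Finset.range N, zchoose m t • W.mode (W.mode a t b) (m + n - t) c := by
    rw [finsum_range _ N (by
      intro i hi
      rw [zero_add, hN i hi, mode_zero_left, smul_zero])]
    apply Finset.sum_congr rfl
    intro t _
    rw [zero_add]
  have hR : (∑ᶠ i : ℕ, ((-1 : ℂ) ^ i * zchoose 0 i) •
        (W.mode a (m + 0 - (i:ℤ)) (W.mode b (n + (i:ℤ)) c)
          - ((-1 : ℂ) ^ (0 : ℤ)) • W.mode b (n + 0 - (i:ℤ)) (W.mode a (m + (i:ℤ)) c)))
      = W.mode a m (W.mode b n c) - W.mode b n (W.mode a m c) := by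
    rw [finsum_range _ 1 (by
      intro i hi
      rw [ZC.zchoose_nat_zero_pos hi, mul_zero, zero_smul])]
    rw [Finset.sum_range_one, ZC.zchoose_zero]
    norm_num
  rw [hL, hR] at B
  rw [B]; abel

/-- Iterate formula for `(a_{-1}b)_q`. -/
lemma iter_mode (a b c : V) (q : ℤ) (N : ℕ)
    (h1 : ∀ i : ℕ, N ≤ i → W.mode b (q + i) c = 0)
    (h2 : ∀ i : ℕ, N ≤ i → W.mode a i c = 0) :
    W.mode (W.mode a (-1) b) q c
      = ∑ i ∈ Finset.range N,
          (W.mode a (-1 - i) (W.mode b (q + i) c) + W.mode b (q - 1 - i) (W.mode a i c)) := by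
  have B := W.borcherds a b c 0 q (-1)
  have hL : (∑ᶠ i : ℕ, zchoose 0 i • W.mode (W.mode a (-1 + (i:ℤ)) b) (0 + q - (i:ℤ)) c)
      = W.mode (W.mode a (-1) b) q c := by
    rw [finsum_range _ 1 (by
      intro i hi
      rw [ZC.zchoose_nat_zero_pos hi, zero_smul])]
    rw [Finset.sum_range_one, ZC.zchoose_zero, one_smul]
    norm_num
  have hR : (∑ᶠ i : ℕ, ((-1 : ℂ) ^ i * zchoose (-1) i) •
        (W.mode a (0 + -1 - (i:ℤ)) (W.mode b (q + (i:ℤ)) c)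
          - ((-1 : ℂ) ^ (-1 : ℤ)) • W.mode b (q + -1 - (i:ℤ)) (W.mode a (0 + (i:ℤ)) c)))
      = ∑ i ∈ Finset.range N,
          (W.mode a (-1 - i) (W.mode b (q + i) c) + W.mode b (q - 1 - i) (W.mode a i c)) := by
    rw [finsum_range _ N (by
      intro i hi
      have h2' : W.mode a (0 + (i:ℤ)) c = 0 := by rw [zero_add]; exact h2 i hi
      rw [h1 i hi, h2']
      rw [(W.mode a _).map_zero, (W.mode b _).map_zero, smul_zero, sub_zero, smul_zero])]
    apply Finset.sum_congr rfl
    intro i _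
    have hc : ((-1 : ℂ) ^ i * zchoose (-1) i) = 1 := by
      rw [ZC.zchoose_neg_one, ← mul_pow]
      norm_num
    have hz : ((-1 : ℂ) ^ (-1 : ℤ)) = -1 := by norm_num
    rw [hc, hz, one_smul, neg_smul, one_smul, sub_neg_eq_add]
    have e1 : (0 + -1 - (i:ℤ)) = -1 - i := by ring
    have e2 : (q + -1 - (i:ℤ)) = q - 1 - i := by ring
    have e3 : (0 + (i:ℤ)) = (i:ℤ) := by ring
    rw [e1, e2, e3]
  rw [hL, hR] at B
  exact B

/-- `u ∘_n v = ∑_i C(k,i) u_{i-2-n} v`. -/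
def circN (n k : ℕ) (a x : V) : V :=
  ∑ i ∈ Finset.range (k+1), (k.choose i : ℂ) • W.mode a ((i:ℤ) - 2 - n) x

lemma circN_zero (k : ℕ) (a x : V) : circN W 0 k a x = W.circH k a x := by
  unfold circN GradedVertexAlgebra.circH
  apply Finset.sum_congr rfl
  intro i _
  norm_num

lemma circH_mem_O {k : ℕ} {a : V} (ha : a ∈ W.grade k) (x : V) : W.circH k a x ∈ W.O :=
  Submodule.subset_span ⟨k, a, x, ha, rfl⟩

lemma O1 : ∀ (n k : ℕ) (a x : V), a ∈ W.grade k → circN W n k a x ∈ W.O := by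
  intro n
  induction n with
  | zero =>
    intro k a x ha
    rw [circN_zero]
    exact circH_mem_O W ha x
  | succ n ih =>
    intro k a x ha
    have hTa : W.mode a (-2) W.vacuum ∈ W.grade (k+1) :=
      mem_grade_mode W ha W.vacuum_mem (by push_cast; ring)
    have hv : ∀ i : ℕ, W.mode (W.mode a (-2) W.vacuum) ((i:ℤ) - 2 - (n:ℕ)) x
        = ((n:ℂ) + 2 - (i:ℂ)) • W.mode a ((i:ℤ) - 3 - (n:ℕ)) x := by
      intro i
      rw [Tmode]
      congr 1
      · push_cast; ring
      · congr 1; ring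
    have key : circN W n (k+1) (W.mode a (-2) W.vacuum) x
        = ((n:ℂ)+2) • circN W (n+1) k a x + ((n:ℂ)+1-(k:ℂ)) • circN W n k a x := by
      unfold circN
      calc ∑ i ∈ Finset.range (k+1+1),
              ((k+1).choose i : ℂ) • W.mode (W.mode a (-2) W.vacuum) ((i:ℤ) - 2 - (n:ℕ)) x
          = ∑ i ∈ Finset.range (k+2),
              ((((k+1).choose i : ℂ)) * ((n:ℂ) + 2 - (i:ℂ))) • W.mode a ((i:ℤ) - 3 - (n:ℕ)) x := by
            apply Finset.sum_congr rfl
            intro i _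
            rw [hv i, smul_smul]
        _ = ∑ i ∈ Finset.range (k+2),
              ((((n:ℂ)+2) * (k.choose i : ℂ)) • W.mode a ((i:ℤ) - 3 - (n:ℕ)) x
                + (if i = 0 then (0:V)
                   else (((n:ℂ)+1-(k:ℂ)) * (k.choose (i-1) : ℂ)) • W.mode a ((i:ℤ) - 3 - (n:ℕ)) x)) := by
            apply Finset.sum_congr rfl
            intro i _
            rcases i with _ | j
            · rw [if_pos rfl, add_zero]
              congr 1
              norm_num
            · rw [if_neg (Nat.succ_ne_zero j), ← add_smul]
              congr 1
              have hA : (((k+1).choose (j+1) : ℂ)) = (k.choose (j+1) : ℂ) + (k.choose j : ℂ) := by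
                rw [Nat.choose_succ_succ']
                push_cast; ring
              have hB : ((j:ℂ)+1) * (((k+1).choose (j+1) : ℂ)) = ((k:ℂ)+1) * (k.choose j : ℂ) := by
                have := Nat.add_one_mul_choose_eq k j
                have hcast : ((k+1) * (k.choose j) : ℂ) = (((k+1).choose (j+1)) * (j+1) : ℂ) := by
                  exact_mod_cast congrArg (fun z : ℕ => (z : ℂ)) this
                push_cast at hcast ⊢
                linear_combination -hcast
              have : ((j+1:ℕ):ℂ) = (j:ℂ) + 1 := by push_cast; ring
              rw [this, Nat.succ_sub_one]
              linear_combination ((n:ℂ)+2) * hA - hB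
        _ = ((n:ℂ)+2) • (∑ i ∈ Finset.range (k+1), (k.choose i : ℂ) • W.mode a ((i:ℤ) - 2 - ((n:ℕ)+1:ℕ)) x)
              + ((n:ℂ)+1-(k:ℂ)) • (∑ i ∈ Finset.range (k+1), (k.choose i : ℂ) • W.mode a ((i:ℤ) - 2 - (n:ℕ)) x) := by
            rw [Finset.sum_add_distrib]
            congr 1
            · rw [Finset.sum_range_succ]
              rw [Nat.choose_succ_self]
              rw [Finset.smul_sum]
              simp only [Nat.cast_zero, mul_zero, zero_smul, add_zero, smul_smul]
              apply Finset.sum_congr rfl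
              intro i _
              congr 2
              push_cast; ring
            · rw [Finset.sum_range_succ']
              rw [if_pos rfl, add_zero]
              rw [Finset.smul_sum]
              apply Finset.sum_congr rfl
              intro i _
              rw [if_neg (Nat.succ_ne_zero i), Nat.succ_sub_one, smul_smul]
              congr 2
              push_cast; ring
    have hne : ((n:ℂ)+2) ≠ 0 := by
      have : ((n:ℂ)+2) = ((n+2:ℕ):ℂ) := by push_cast; ring
      rw [this]
      exact Nat.cast_ne_zero.2 (by omega)
    have h2 : circN W (n+1) k a x
        = ((n:ℂ)+2)⁻¹ • (circN W n (k+1) (W.mode a (-2) W.vacuum) x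
            - ((n:ℂ)+1-(k:ℂ)) • circN W n k a x) := by
      rw [key]
      rw [add_sub_cancel_right, smul_smul, inv_mul_cancel₀ hne, one_smul]
    rw [h2]
    exact Submodule.smul_mem _ _ (Submodule.sub_mem _ (ih (k+1) _ x hTa)
      (Submodule.smul_mem _ _ (ih k a x ha)))

/-- Splitting off the top term of `circN`. -/
lemma circN_split (n k : ℕ) (a x : V) :
    W.mode a (-2 - (n:ℕ)) x
      = circN W n k a x
        - ∑ i ∈ Finset.range k, (k.choose (i+1) : ℂ) • W.mode a (((i+1:ℕ):ℤ) - 2 - (n:ℕ)) x := by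
  unfold circN
  rw [Finset.sum_range_succ']
  simp only [Nat.choose_zero_right, Nat.cast_one, Nat.cast_zero, one_smul]
  have h0 : (0:ℤ) - 2 - (n:ℕ) = -2 - (n:ℕ) := by norm_num
  rw [h0]
  abel

/-- Deep negative modes of homogeneous vectors lie in `A` as soon as all strictly
smaller weights do. -/
lemma DN (A : Submodule ℂ V) (hO : W.O ≤ A) {δ ν n : ℕ} {a x : V}
    (ha : a ∈ W.grade δ) (hx : x ∈ W.grade ν)
    (hlow : ∀ j : ℕ, 1 ≤ j → j ≤ δ → W.grade (δ + ν + n + 1 - j) ≤ A) :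
    W.mode a (-2 - (n:ℕ)) x ∈ A := by
  rw [circN_split W n δ a x]
  apply Submodule.sub_mem
  · exact hO (O1 W n δ a x ha)
  · apply Submodule.sum_mem
    intro i hi
    apply Submodule.smul_mem
    have hir := Finset.mem_range.mp hi
    have hmem : W.mode a (((i+1:ℕ):ℤ) - 2 - (n:ℕ)) x ∈ W.grade (δ + ν + n + 1 - (i+1)) := by
      apply mem_grade_mode W ha hx
      omega
    exact hlow (i+1) (by omega) (by omega) hmem

/-- `a ∘ 𝟙 = a_{-2}𝟙 + k a`. -/
lemma circH_vacuum (k : ℕ) (a : V) :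
    W.circH k a W.vacuum = W.mode a (-2) W.vacuum + (k:ℂ) • a := by
  unfold GradedVertexAlgebra.circH
  have hvan : ∀ i ∈ Finset.range (k+1), ¬ i < 2 → (k.choose i : ℂ) • W.mode a ((i:ℤ)-2) W.vacuum = 0 := by
    intro i _ hi2
    rw [W.creation_nonneg a _ (by omega), smul_zero]
  rcases Nat.lt_or_ge k 2 with hk | hk
  · interval_cases k
    · rw [Finset.sum_range_one]
      norm_num
    · rw [Finset.sum_range_succ, Finset.sum_range_one]
      have e1 : ((1:ℕ):ℤ) - 2 = -1 := by norm_num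
      rw [e1, W.creation a]
      norm_num
  · rw [← Finset.sum_subset (Finset.range_subset_range.mpr (by omega : 2 ≤ k + 1))
      (fun i hi hni => hvan i hi (by simp at hni ⊢; omega))]
    rw [Finset.sum_range_succ, Finset.sum_range_one]
    have e1 : ((1:ℕ):ℤ) - 2 = -1 := by norm_num
    rw [e1, W.creation a]
    norm_num

/-- `a ∗ 𝟙 = a`. -/
lemma starH_vacuum (k : ℕ) (a : V) : W.starH k a W.vacuum = a := by
  unfold GradedVertexAlgebra.starH
  have hvan : ∀ i ∈ Finset.range (k+1), ¬ i < 1 → (k.choose i : ℂ) • W.mode a ((i:ℤ)-1) W.vacuum = 0 := by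
    intro i _ hi2
    rw [W.creation_nonneg a _ (by omega), smul_zero]
  rw [← Finset.sum_subset (Finset.range_subset_range.mpr (by omega : 1 ≤ k + 1))
      (fun i hi hni => hvan i hi (by simp at hni ⊢; omega))]
  rw [Finset.sum_range_one]
  have e1 : ((0:ℕ):ℤ) - 1 = -1 := by norm_num
  rw [e1, W.creation a]
  norm_num

/-- `starH` as a linear map in the right argument. -/
def starL (k : ℕ) (a : V) : V →ₗ[ℂ] V where
  toFun := W.starH k a
  map_add' x y := by
    unfold GradedVertexAlgebra.starH
    rw [← Finset.sum_add_distrib]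
    apply Finset.sum_congr rfl
    intro i _
    rw [map_add, smul_add]
  map_smul' c x := by
    unfold GradedVertexAlgebra.starH
    simp only [RingHom.id_apply, Finset.smul_sum]
    apply Finset.sum_congr rfl
    intro i _
    rw [map_smul, smul_comm]

/-- Evaluation of a polynomial into shifted modes: `X^e ↦ d_{e+s} c`. -/
def msum (d c : V) (s : ℤ) : Polynomial ℂ →ₗ[ℂ] V where
  toFun p := p.sum fun e z => z • W.mode d ((e:ℤ) + s) c
  map_add' p q := Polynomial.sum_add_index p q _ (fun e => zero_smul ℂ _)
    (fun e z₁ z₂ => add_smul z₁ z₂ _)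
  map_smul' r p := by
    simp only [RingHom.id_apply]
    rw [Polynomial.sum_smul_index p r (fun e z => z • W.mode d ((e:ℤ) + s) c)
      (fun e => zero_smul ℂ _)]
    rw [Polynomial.sum, Polynomial.sum, Finset.smul_sum]
    apply Finset.sum_congr rfl
    intro e _
    rw [mul_smul]

lemma msum_monomial (d c : V) (s : ℤ) (e : ℕ) (z : ℂ) :
    msum W d c s (Polynomial.C z * Polynomial.X ^ e) = z • W.mode d ((e:ℤ) + s) c := by
  unfold msum
  simp only [LinearMap.coe_mk, AddHom.coe_mk]
  rw [Polynomial.C_mul_X_pow_eq_monomial]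
  exact Polynomial.sum_monomial_index z _ (zero_smul ℂ _)

lemma msum_one_add_X_pow_mul (d c : V) (s : ℤ) (γ : ℕ) (e : ℕ) (z : ℂ) :
    msum W d c s ((1 + Polynomial.X) ^ γ * (Polynomial.C z * Polynomial.X ^ e))
      = z • ∑ i ∈ Finset.range (γ+1), (γ.choose i : ℂ) • W.mode d ((i:ℤ) + e + s) c := by
  rw [ZC.one_add_X_pow γ, Finset.sum_mul, map_sum, Finset.smul_sum]
  apply Finset.sum_congr rfl
  intro i _
  have : Polynomial.C ((γ.choose i : ℂ)) * Polynomial.X ^ i * (Polynomial.C z * Polynomial.X ^ e)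
      = Polynomial.C ((γ.choose i : ℂ) * z) * Polynomial.X ^ (i + e) := by
    rw [Polynomial.C_mul]
    ring
  rw [this, msum_monomial]
  have he : ((i+e:ℕ):ℤ) + s = (i:ℤ) + e + s := by push_cast; ring
  rw [he, smul_smul, mul_comm]

/-- The `t`-th commutator contribution to `a ∗ (b ∘ c)` lies in `O(V)`. -/
lemma Tt_mem (t : ℕ) {α β : ℕ} {a b : V} (ha : a ∈ W.grade α) (hb : b ∈ W.grade β) (c : V) :
    (∑ i ∈ Finset.range (α+1), ∑ j ∈ Finset.range (β+1),
      ((α.choose i : ℂ) * (β.choose j : ℂ) * zchoose ((i:ℤ)-1) t) •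
        W.mode (W.mode a (t:ℕ) b) ((i:ℤ) + (j:ℤ) - 3 - (t:ℕ)) c) ∈ W.O := by
  by_cases hneg : (α:ℤ) + (β:ℤ) - (t:ℕ) - 1 < 0
  · have hd : W.mode a (t:ℕ) b = 0 := mode_eq_zero_of_neg W ha hb hneg
    rw [hd]
    simp only [mode_zero_left, smul_zero, Finset.sum_const_zero]
    exact Submodule.zero_mem _
  · push_neg at hneg
    obtain ⟨γ, hγ⟩ : ∃ γ : ℕ, (γ:ℤ) = (α:ℤ) + β - t - 1 := ⟨α + β - 1 - t, by omega⟩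
    have hd : W.mode a (t:ℕ) b ∈ W.grade γ := mem_grade_mode W ha hb (by omega)
    set d := W.mode a (t:ℕ) b with hdd
    have hA : (∑ i ∈ Finset.range (α+1), ∑ j ∈ Finset.range (β+1),
          ((α.choose i : ℂ) * (β.choose j : ℂ) * zchoose ((i:ℤ)-1) t) •
            W.mode d ((i:ℤ) + (j:ℤ) - 3 - (t:ℕ)) c)
        = msum W d c (-3 - (t:ℕ)) ((1 + Polynomial.X)^β * ZC.Lp α t) := by
      rw [ZC.Lp, Finset.mul_sum, map_sum]
      apply Finset.sum_congr rfl
      intro i _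
      rw [msum_one_add_X_pow_mul, Finset.smul_sum]
      apply Finset.sum_congr rfl
      intro j _
      rw [smul_smul]
      have he : (j:ℤ) + (i:ℤ) + (-3 - (t:ℕ)) = (i:ℤ) + (j:ℤ) - 3 - (t:ℕ) := by ring
      rw [he]
      congr 1
      ring
    rw [hA, ZC.cpi' α β t γ (by omega)]
    rw [ZC.Rp, Finset.mul_sum, map_sum]
    apply Submodule.sum_mem
    intro s hs
    have hs' := Finset.mem_range.mp hs
    have hsplit : (1 + Polynomial.X (R := ℂ))^γ
          * (Polynomial.C ((-1:ℂ)^(t-s) * (α.choose s : ℂ)) * Polynomial.X^s * (1 + Polynomial.X)^(t+1-s))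
        = ∑ r ∈ Finset.range (t+1-s+1),
            (1 + Polynomial.X)^γ * (Polynomial.C ((-1:ℂ)^(t-s) * (α.choose s : ℂ)
              * ((t+1-s).choose r : ℂ)) * Polynomial.X^(s+r)) := by
      conv_lhs => rw [ZC.one_add_X_pow (t+1-s)]
      rw [Finset.mul_sum, Finset.mul_sum]
      apply Finset.sum_congr rfl
      intro r _
      simp only [Polynomial.C_mul]
      rw [pow_add]
      ring
    rw [hsplit, map_sum]
    apply Submodule.sum_mem
    intro r hr
    have hr' := Finset.mem_range.mp hr
    rw [msum_one_add_X_pow_mul]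
    apply Submodule.smul_mem
    have he : ∀ i : ℕ, ((i:ℤ) + ((s+r:ℕ):ℤ) + (-3 - (t:ℕ))) = (i:ℤ) - 2 - ((t+1-s-r:ℕ):ℤ) := by
      intro i; omega
    simp only [he]
    exact O1 W (t+1-s-r) γ d c hd

/-- Key lemma: `a ∗ (b ∘ c) ∈ O(V)` for homogeneous `a` and `b`. -/
lemma L1 {α β : ℕ} {a b : V} (ha : a ∈ W.grade α) (hb : b ∈ W.grade β) (c : V) :
    W.starH α a (W.circH β b c) ∈ W.O := by
  obtain ⟨N, hN⟩ := W.truncation a b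
  have step1 : W.starH α a (W.circH β b c)
      = ∑ i ∈ Finset.range (α+1), ∑ j ∈ Finset.range (β+1),
          ((α.choose i : ℂ) * (β.choose j : ℂ)) • W.mode a ((i:ℤ)-1) (W.mode b ((j:ℤ)-2) c) := by
    unfold GradedVertexAlgebra.starH GradedVertexAlgebra.circH
    apply Finset.sum_congr rfl
    intro i _
    rw [map_sum, Finset.smul_sum]
    apply Finset.sum_congr rfl
    intro j _
    rw [map_smul, smul_smul]
  have step1' : W.circH β b (W.starH α a c)
      = ∑ j ∈ Finset.range (β+1), ∑ i ∈ Finset.range (α+1),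
          ((β.choose j : ℂ) * (α.choose i : ℂ)) • W.mode b ((j:ℤ)-2) (W.mode a ((i:ℤ)-1) c) := by
    unfold GradedVertexAlgebra.starH GradedVertexAlgebra.circH
    apply Finset.sum_congr rfl
    intro j _
    rw [map_sum, Finset.smul_sum]
    apply Finset.sum_congr rfl
    intro i _
    rw [map_smul, smul_smul]
  have step2 : ∀ i j : ℕ, W.mode a ((i:ℤ)-1) (W.mode b ((j:ℤ)-2) c)
      = W.mode b ((j:ℤ)-2) (W.mode a ((i:ℤ)-1) c)
        + ∑ t ∈ Finset.range N,
            zchoose ((i:ℤ)-1) t • W.mode (W.mode a t b) ((i:ℤ) + (j:ℤ) - 3 - t) c := by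
    intro i j
    have hcm := comm_mode W a b c ((i:ℤ)-1) ((j:ℤ)-2) N hN
    have he : ∀ t : ℕ, ((i:ℤ)-1) + ((j:ℤ)-2) - t = (i:ℤ) + (j:ℤ) - 3 - t := by
      intro t; ring
    simp only [he] at hcm
    exact hcm
  have expand : W.starH α a (W.circH β b c)
      = W.circH β b (W.starH α a c)
        + ∑ t ∈ Finset.range N, (∑ i ∈ Finset.range (α+1), ∑ j ∈ Finset.range (β+1),
            ((α.choose i : ℂ) * (β.choose j : ℂ) * zchoose ((i:ℤ)-1) t) •
              W.mode (W.mode a (t:ℕ) b) ((i:ℤ) + (j:ℤ) - 3 - (t:ℕ)) c) := by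
    rw [step1]
    have split : ∑ i ∈ Finset.range (α+1), ∑ j ∈ Finset.range (β+1),
          ((α.choose i : ℂ) * (β.choose j : ℂ)) • W.mode a ((i:ℤ)-1) (W.mode b ((j:ℤ)-2) c)
        = (∑ i ∈ Finset.range (α+1), ∑ j ∈ Finset.range (β+1),
            ((α.choose i : ℂ) * (β.choose j : ℂ)) • W.mode b ((j:ℤ)-2) (W.mode a ((i:ℤ)-1) c))
          + ∑ i ∈ Finset.range (α+1), ∑ j ∈ Finset.range (β+1),
              ((α.choose i : ℂ) * (β.choose j : ℂ)) •
                (∑ t ∈ Finset.range N,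
                  zchoose ((i:ℤ)-1) t • W.mode (W.mode a t b) ((i:ℤ) + (j:ℤ) - 3 - t) c) := by
      rw [← Finset.sum_add_distrib]
      apply Finset.sum_congr rfl
      intro i _
      rw [← Finset.sum_add_distrib]
      apply Finset.sum_congr rfl
      intro j _
      rw [step2 i j, smul_add]
    rw [split]
    congr 1
    · rw [step1', Finset.sum_comm]
      apply Finset.sum_congr rfl
      intro i _
      apply Finset.sum_congr rfl
      intro j _
      rw [mul_comm]
    · have hin : ∀ i j : ℕ,
          ((α.choose i : ℂ) * (β.choose j : ℂ)) •
            (∑ t ∈ Finset.range N,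
              zchoose ((i:ℤ)-1) t • W.mode (W.mode a t b) ((i:ℤ) + (j:ℤ) - 3 - t) c)
          = ∑ t ∈ Finset.range N, ((α.choose i : ℂ) * (β.choose j : ℂ) * zchoose ((i:ℤ)-1) t) •
              W.mode (W.mode a t b) ((i:ℤ) + (j:ℤ) - 3 - t) c := by
        intro i j
        rw [Finset.smul_sum]
        apply Finset.sum_congr rfl
        intro t _
        rw [smul_smul]
      calc ∑ i ∈ Finset.range (α+1), ∑ j ∈ Finset.range (β+1),
            ((α.choose i : ℂ) * (β.choose j : ℂ)) •
              (∑ t ∈ Finset.range N,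
                zchoose ((i:ℤ)-1) t • W.mode (W.mode a t b) ((i:ℤ) + (j:ℤ) - 3 - t) c)
          = ∑ i ∈ Finset.range (α+1), ∑ j ∈ Finset.range (β+1), ∑ t ∈ Finset.range N,
              ((α.choose i : ℂ) * (β.choose j : ℂ) * zchoose ((i:ℤ)-1) t) •
                W.mode (W.mode a t b) ((i:ℤ) + (j:ℤ) - 3 - t) c := by
            apply Finset.sum_congr rfl
            intro i _
            apply Finset.sum_congr rfl
            intro j _
            exact hin i j
        _ = ∑ i ∈ Finset.range (α+1), ∑ t ∈ Finset.range N, ∑ j ∈ Finset.range (β+1),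
              ((α.choose i : ℂ) * (β.choose j : ℂ) * zchoose ((i:ℤ)-1) t) •
                W.mode (W.mode a t b) ((i:ℤ) + (j:ℤ) - 3 - t) c := by
            apply Finset.sum_congr rfl
            intro i _
            exact Finset.sum_comm
        _ = ∑ t ∈ Finset.range N, ∑ i ∈ Finset.range (α+1), ∑ j ∈ Finset.range (β+1),
              ((α.choose i : ℂ) * (β.choose j : ℂ) * zchoose ((i:ℤ)-1) t) •
                W.mode (W.mode a t b) ((i:ℤ) + (j:ℤ) - 3 - t) c := Finset.sum_comm
  rw [expand]
  apply Submodule.add_mem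
  · exact circH_mem_O W hb _
  · exact Submodule.sum_mem _ (fun t _ => Tt_mem W t ha hb c)

/-- `a ∗ O(V) ⊆ O(V)` for homogeneous `a`. -/
lemma L1span {α : ℕ} {a : V} (ha : a ∈ W.grade α) {x : V} (hx : x ∈ W.O) :
    W.starH α a x ∈ W.O := by
  have key : ∀ y ∈ W.O, starL W α a y ∈ W.O := by
    intro y hy
    induction hy using Submodule.span_induction with
    | mem z hz =>
      obtain ⟨k, b, c, hb, rfl⟩ := hz
      exact L1 W ha hb c
    | zero => rw [map_zero]; exact Submodule.zero_mem _
    | add y z _ _ hy hz => rw [map_add]; exact Submodule.add_mem _ hy hz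
    | smul r y _ hy => rw [map_smul]; exact Submodule.smul_mem _ r hy
  exact key x hx

lemma mode_add_left (n : ℤ) (y x1 x2 : V) :
    W.mode (x1 + x2) n y = W.mode x1 n y + W.mode x2 n y :=
  (modeL W n y).map_add x1 x2

lemma mode_smul_left (n : ℤ) (y : V) (c : ℂ) (x : V) :
    W.mode (c • x) n y = c • W.mode x n y :=
  (modeL W n y).map_smul c x

/-- Splitting off the `i = 0` term of `starH`. -/
lemma starH_split (k : ℕ) (a x : V) :
    W.mode a (-1) x
      = W.starH k a x
        - ∑ j ∈ Finset.range k, (k.choose (j+1) : ℂ) • W.mode a (((j+1:ℕ):ℤ) - 1) x := by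
  unfold GradedVertexAlgebra.starH
  rw [Finset.sum_range_succ']
  simp only [Nat.choose_zero_right, Nat.cast_one, Nat.cast_zero, one_smul]
  have h0 : (0:ℤ) - 1 = -1 := by norm_num
  rw [h0]
  abel

end ZhuAux


/-- if `V` is `C_1`-cofinite with `C_1`-generators `u^1, …, u^l` (homogeneous
of positive weights, spanning a complement of `C_1(V)` in `V_+`), then Zhu's algebra
`A(V) = V/O(V)` is generated as an associative algebra by the images `o(u^1), …, o(u^l)`:
every element of `V` lies in the span of the `∗`-words in the generators plus `O(V)`. -/
theorem zhu_generated_by_C1_generators {V : Type*} [AddCommGroup V] [Module ℂ V]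
    (W : GradedVertexAlgebra V) (l : ℕ) (u : Fin l → V) (wt : Fin l → ℕ)
    (hpos : ∀ i, 0 < wt i)
    (hhom : ∀ i, u i ∈ W.grade (wt i))
    (hgen : W.Vplus ≤ Submodule.span ℂ (Set.range u) ⊔ W.C1) :
    ∀ v : V,
      v ∈ Submodule.span ℂ {x | ∃ g : List (Fin l), x = word W u wt g} ⊔ W.O := by
  classical
  intro v
  by_cases hvac : W.vacuum = 0
  · have hv0 : v = 0 := by
      have h := W.creation v
      rw [hvac, (W.mode v (-1)).map_zero] at h
      exact h.symm
    rw [hv0]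
    exact Submodule.zero_mem _
  set SW : Set V := {x | ∃ g : List (Fin l), x = word W u wt g} with hSW
  set A : Submodule ℂ V := Submodule.span ℂ SW ⊔ W.O with hA
  show v ∈ A
  have hOA : W.O ≤ A := le_sup_right
  have hword : ∀ g : List (Fin l), word W u wt g ∈ A := fun g =>
    Submodule.mem_sup_left (Submodule.subset_span ⟨g, rfl⟩)
  have hstarword : ∀ (i : Fin l), ∀ y ∈ Submodule.span ℂ SW,
      ZhuAux.starL W (wt i) (u i) y ∈ Submodule.span ℂ SW := by
    intro i y hy
    induction hy using Submodule.span_induction with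
    | mem z hz =>
      obtain ⟨g, rfl⟩ := hz
      exact Submodule.subset_span ⟨i :: g, rfl⟩
    | zero => rw [map_zero]; exact Submodule.zero_mem _
    | add y z _ _ h1 h2 => rw [map_add]; exact Submodule.add_mem _ h1 h2
    | smul r y _ h1 => rw [map_smul]; exact Submodule.smul_mem _ r h1
  have hstarA : ∀ (i : Fin l), ∀ y ∈ A, W.starH (wt i) (u i) y ∈ A := by
    intro i y hy
    obtain ⟨w, hw, o, ho, rfl⟩ := Submodule.mem_sup.mp hy
    have hmap : W.starH (wt i) (u i) (w + o)
        = ZhuAux.starL W (wt i) (u i) w + ZhuAux.starL W (wt i) (u i) o :=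
      (ZhuAux.starL W (wt i) (u i)).map_add w o
    rw [hmap]
    exact Submodule.add_mem _ (Submodule.mem_sup_left (hstarword i w hw))
      (Submodule.mem_sup_right (ZhuAux.L1span W (hhom i) ho))
  set S1 : Set V := {x | ∃ a ∈ W.Vplus, ∃ b ∈ W.Vplus, x = W.mode a (-1) b} with hS1
  set S2 : Set V := {x | ∃ a ∈ W.Vplus, x = W.mode a (-2) W.vacuum} with hS2
  have hset : W.Vplus ≤ Submodule.span ℂ (Set.range u ∪ (S1 ∪ S2)) := by
    have hC1 : W.C1 = Submodule.span ℂ (S1 ∪ S2) := rfl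
    rw [Submodule.span_union, ← hC1]
    exact hgen
  have main : ∀ n : ℕ, ∀ x ∈ W.grade n, x ∈ A := by
    intro n
    induction n using Nat.strong_induction_on with
    | _ n IH =>
    rcases Nat.eq_zero_or_pos n with rfl | hn
    · -- weight 0
      intro x hx
      have hvne : (⟨W.vacuum, W.vacuum_mem⟩ : W.grade 0) ≠ 0 :=
        fun h => hvac (congrArg Subtype.val h)
      obtain ⟨c, hc⟩ := (finrank_eq_one_iff_of_nonzero'
        (⟨W.vacuum, W.vacuum_mem⟩ : W.grade 0) hvne).mp W.grade_zero_dim ⟨x, hx⟩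
      have hc' : c • W.vacuum = x := congrArg Subtype.val hc
      rw [← hc']
      apply Submodule.smul_mem
      exact hword []
    · -- weight n ≥ 1
      have INlem : ∀ k : ℕ, 1 ≤ k → ∀ m : ℕ, k + m = n → ∀ d ∈ W.grade k, ∀ y ∈ W.grade m,
          W.mode d (-1) y ∈ A := by
        intro k
        induction k using Nat.strong_induction_on with
        | _ k IHk =>
        intro hk m hkm d hd y hy
        have hdV : d ∈ W.Vplus :=
          (le_iSup (fun p : {q : ℕ // 1 ≤ q} => W.grade (p : ℕ)) ⟨k, hk⟩) hd
        have haux : ∀ z ∈ Submodule.span ℂ (Set.range u ∪ (S1 ∪ S2)),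
            ZhuAux.modeL W (-1) y (ZhuAux.compL W k z) ∈ A := by
          intro z hz
          induction hz using Submodule.span_induction with
          | zero => rw [map_zero, map_zero]; exact Submodule.zero_mem _
          | add z1 z2 _ _ h1 h2 => rw [map_add, map_add]; exact Submodule.add_mem _ h1 h2
          | smul r z _ h1 => rw [map_smul, map_smul]; exact Submodule.smul_mem _ r h1
          | mem z hz =>
            rcases hz with hz | hz | hz
            · -- generator
              obtain ⟨i, rfl⟩ := hz
              by_cases hwt : wt i = k
              · have hcu : ZhuAux.compL W k (u i) = u i := ZhuAux.compL_same W (hwt ▸ hhom i)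
                rw [hcu]
                show W.mode (u i) (-1) y ∈ A
                rw [ZhuAux.starH_split W k (u i) y]
                apply Submodule.sub_mem
                · have hyA : y ∈ A := IH m (by omega) y hy
                  rw [← hwt]
                  exact hstarA i y hyA
                · apply Submodule.sum_mem
                  intro j hj
                  have hjk := Finset.mem_range.mp hj
                  apply Submodule.smul_mem
                  have hmem : W.mode (u i) (((j+1:ℕ):ℤ) - 1) y ∈ W.grade (n - 1 - j) := by
                    apply ZhuAux.mem_grade_mode W (hhom i) hy
                    omega
                  exact IH (n - 1 - j) (by omega) _ hmem
              · rw [ZhuAux.compL_ne W (hhom i) hwt, map_zero]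
                exact Submodule.zero_mem _
            · -- S1 generator
              obtain ⟨a, haV, b, hbV, rfl⟩ := hz
              obtain ⟨sa, hsa⟩ := ZhuAux.sum_compL W a
              obtain ⟨sb, hsb⟩ := ZhuAux.sum_compL W b
              have hab : W.mode a (-1) b
                  = ∑ β ∈ sa, ∑ γ ∈ sb,
                      W.mode (ZhuAux.compL W β a) (-1) (ZhuAux.compL W γ b) := by
                conv_lhs => rw [← hsa, ← hsb]
                rw [show W.mode (∑ β ∈ sa, ZhuAux.compL W β a) (-1) (∑ γ ∈ sb, ZhuAux.compL W γ b)
                    = ∑ β ∈ sa, W.mode (ZhuAux.compL W β a) (-1) (∑ γ ∈ sb, ZhuAux.compL W γ b) from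
                  map_sum (ZhuAux.modeL W (-1) (∑ γ ∈ sb, ZhuAux.compL W γ b))
                    (fun β => ZhuAux.compL W β a) sa]
                apply Finset.sum_congr rfl
                intro β _
                exact map_sum (W.mode (ZhuAux.compL W β a) (-1)) (fun γ => ZhuAux.compL W γ b) sb
              rw [hab]
              rw [map_sum, map_sum]
              simp only [map_sum]
              apply Submodule.sum_mem
              intro β _
              apply Submodule.sum_mem
              intro γ _
              by_cases hβ0 : β = 0
              · rw [hβ0, ZhuAux.vplus_comp_zero W haV, ZhuAux.mode_zero_left, map_zero, map_zero]
                exact Submodule.zero_mem _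
              by_cases hγ0 : γ = 0
              · rw [hγ0, ZhuAux.vplus_comp_zero W hbV, (W.mode _ _).map_zero, map_zero, map_zero]
                exact Submodule.zero_mem _
              have hd' : ZhuAux.compL W β a ∈ W.grade β := ZhuAux.compL_mem W β a
              have he : ZhuAux.compL W γ b ∈ W.grade γ := ZhuAux.compL_mem W γ b
              have hT : W.mode (ZhuAux.compL W β a) (-1) (ZhuAux.compL W γ b) ∈ W.grade (β + γ) :=
                ZhuAux.mem_grade_mode W hd' he (by push_cast; ring)
              by_cases hbg : β + γ = k
              · rw [ZhuAux.compL_same W (hbg ▸ hT)]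
                show W.mode (W.mode (ZhuAux.compL W β a) (-1) (ZhuAux.compL W γ b)) (-1) y ∈ A
                obtain ⟨N1, hN1⟩ := ZhuAux.trunc' W (ZhuAux.compL W γ b) y
                obtain ⟨N2, hN2⟩ := ZhuAux.trunc' W (ZhuAux.compL W β a) y
                rw [ZhuAux.iter_mode W (ZhuAux.compL W β a) (ZhuAux.compL W γ b) y (-1)
                  (N1 + N2 + 1)
                  (fun i hi => hN1 (-1 + (i:ℤ)) (by omega))
                  (fun i hi => hN2 (i:ℤ) (by omega))]
                apply Submodule.sum_mem
                intro i _
                apply Submodule.add_mem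
                · -- first family
                  rcases i with _ | i'
                  · have hmem : W.mode (ZhuAux.compL W γ b) (-1 + ((0:ℕ):ℤ)) y
                        ∈ W.grade (γ + m) :=
                      ZhuAux.mem_grade_mode W he hy (by push_cast; ring)
                    have hres := IHk β (by omega) (by omega) (γ + m) (by omega)
                      (ZhuAux.compL W β a) hd' _ hmem
                    have hidx : (-1 - ((0:ℕ):ℤ)) = -1 := by norm_num
                    rw [hidx]
                    exact hres
                  · have hidx : (-1 - (((i'+1):ℕ):ℤ)) = -2 - ((i':ℕ):ℤ) := by push_cast; ring
                    rw [hidx]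
                    by_cases hw : (γ:ℤ) + (m:ℤ) - (-1 + (((i'+1):ℕ):ℤ)) - 1 < 0
                    · rw [ZhuAux.mode_eq_zero_of_neg W he hy hw,
                        (W.mode (ZhuAux.compL W β a) _).map_zero]
                      exact Submodule.zero_mem _
                    · push_neg at hw
                      obtain ⟨ν, hν⟩ : ∃ ν : ℕ,
                          (ν:ℤ) = (γ:ℤ) + (m:ℤ) - (-1 + (((i'+1):ℕ):ℤ)) - 1 :=
                        ⟨γ + m - 1 - i', by omega⟩
                      have hw' : W.mode (ZhuAux.compL W γ b) (-1 + (((i'+1):ℕ):ℤ)) y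
                          ∈ W.grade ν := ZhuAux.mem_grade_mode W he hy (by omega)
                      apply ZhuAux.DN W A hOA hd' hw'
                      intro j hj1 hj2
                      have heq : β + ν + i' + 1 - j = n - j := by omega
                      rw [heq]
                      intro z hz
                      exact IH (n - j) (by omega) z hz
                · -- second family
                  have hidx : (-1 - 1 - ((i:ℕ):ℤ)) = -2 - ((i:ℕ):ℤ) := by ring
                  rw [hidx]
                  by_cases hw : (β:ℤ) + (m:ℤ) - ((i:ℕ):ℤ) - 1 < 0
                  · rw [ZhuAux.mode_eq_zero_of_neg W hd' hy hw,
                      (W.mode (ZhuAux.compL W γ b) _).map_zero]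
                    exact Submodule.zero_mem _
                  · push_neg at hw
                    obtain ⟨ν, hν⟩ : ∃ ν : ℕ, (ν:ℤ) = (β:ℤ) + (m:ℤ) - ((i:ℕ):ℤ) - 1 :=
                      ⟨β + m - 1 - i, by omega⟩
                    have hw' : W.mode (ZhuAux.compL W β a) ((i:ℕ):ℤ) y ∈ W.grade ν :=
                      ZhuAux.mem_grade_mode W hd' hy (by omega)
                    apply ZhuAux.DN W A hOA he hw'
                    intro j hj1 hj2
                    have heq : γ + ν + i + 1 - j = n - j := by omega
                    rw [heq]
                    intro z hz
                    exact IH (n - j) (by omega) z hz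
              · rw [ZhuAux.compL_ne W hT hbg, map_zero]
                exact Submodule.zero_mem _
            · -- S2 generator
              obtain ⟨a, haV, rfl⟩ := hz
              obtain ⟨sa, hsa⟩ := ZhuAux.sum_compL W a
              have hab : W.mode a (-2) W.vacuum
                  = ∑ β ∈ sa, W.mode (ZhuAux.compL W β a) (-2) W.vacuum := by
                conv_lhs => rw [← hsa]
                exact map_sum (ZhuAux.modeL W (-2) W.vacuum) (fun β => ZhuAux.compL W β a) sa
              rw [hab, map_sum, map_sum]
              apply Submodule.sum_mem
              intro β _
              have hT : W.mode (ZhuAux.compL W β a) (-2) W.vacuum ∈ W.grade (β + 1) :=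
                ZhuAux.mem_grade_mode W (ZhuAux.compL_mem W β a) W.vacuum_mem (by push_cast; ring)
              by_cases hb1 : β + 1 = k
              · rw [ZhuAux.compL_same W (hb1 ▸ hT)]
                show W.mode (W.mode (ZhuAux.compL W β a) (-2) W.vacuum) (-1) y ∈ A
                rw [ZhuAux.Tmode W (ZhuAux.compL W β a) y (-1)]
                have hco : ((-(-1) : ℤ) : ℂ) = 1 := by norm_num
                rw [hco, one_smul]
                have hidx : (-1 - 1 : ℤ) = -2 - ((0:ℕ):ℤ) := by norm_num
                rw [hidx]
                apply ZhuAux.DN W A hOA (ZhuAux.compL_mem W β a) hy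
                intro j hj1 hj2
                have heq : β + m + 0 + 1 - j = n - j := by omega
                rw [heq]
                intro z hz
                exact IH (n - j) (by omega) z hz
              · rw [ZhuAux.compL_ne W hT hb1, map_zero]
                exact Submodule.zero_mem _
        have hres := haux d (hset hdV)
        rw [ZhuAux.compL_same W hd] at hres
        exact hres
      -- now the weight-n statement itself
      intro x hx
      have hxV : x ∈ W.Vplus :=
        (le_iSup (fun p : {q : ℕ // 1 ≤ q} => W.grade (p : ℕ)) ⟨n, hn⟩) hx
      have haux2 : ∀ z ∈ Submodule.span ℂ (Set.range u ∪ (S1 ∪ S2)),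
          ZhuAux.compL W n z ∈ A := by
        intro z hz
        induction hz using Submodule.span_induction with
        | zero => rw [map_zero]; exact Submodule.zero_mem _
        | add z1 z2 _ _ h1 h2 => rw [map_add]; exact Submodule.add_mem _ h1 h2
        | smul r z _ h1 => rw [map_smul]; exact Submodule.smul_mem _ r h1
        | mem z hz =>
          rcases hz with hz | hz | hz
          · obtain ⟨i, rfl⟩ := hz
            by_cases hwt : wt i = n
            · rw [ZhuAux.compL_same W (hwt ▸ hhom i)]
              have hrw : word W u wt [i] = u i := ZhuAux.starH_vacuum W (wt i) (u i)
              rw [← hrw]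
              exact hword [i]
            · rw [ZhuAux.compL_ne W (hhom i) hwt]
              exact Submodule.zero_mem _
          · obtain ⟨a, haV, b, hbV, rfl⟩ := hz
            obtain ⟨sa, hsa⟩ := ZhuAux.sum_compL W a
            obtain ⟨sb, hsb⟩ := ZhuAux.sum_compL W b
            have hab : W.mode a (-1) b
                = ∑ β ∈ sa, ∑ γ ∈ sb,
                    W.mode (ZhuAux.compL W β a) (-1) (ZhuAux.compL W γ b) := by
              conv_lhs => rw [← hsa, ← hsb]
              rw [show W.mode (∑ β ∈ sa, ZhuAux.compL W β a) (-1) (∑ γ ∈ sb, ZhuAux.compL W γ b)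
                  = ∑ β ∈ sa, W.mode (ZhuAux.compL W β a) (-1) (∑ γ ∈ sb, ZhuAux.compL W γ b) from
                map_sum (ZhuAux.modeL W (-1) (∑ γ ∈ sb, ZhuAux.compL W γ b))
                  (fun β => ZhuAux.compL W β a) sa]
              apply Finset.sum_congr rfl
              intro β _
              exact map_sum (W.mode (ZhuAux.compL W β a) (-1)) (fun γ => ZhuAux.compL W γ b) sb
            rw [hab]
            simp only [map_sum]
            apply Submodule.sum_mem
            intro β _
            apply Submodule.sum_mem
            intro γ _
            by_cases hβ0 : β = 0
            · rw [hβ0, ZhuAux.vplus_comp_zero W haV, ZhuAux.mode_zero_left, map_zero]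
              exact Submodule.zero_mem _
            have hd' : ZhuAux.compL W β a ∈ W.grade β := ZhuAux.compL_mem W β a
            have he : ZhuAux.compL W γ b ∈ W.grade γ := ZhuAux.compL_mem W γ b
            have hT : W.mode (ZhuAux.compL W β a) (-1) (ZhuAux.compL W γ b) ∈ W.grade (β + γ) :=
              ZhuAux.mem_grade_mode W hd' he (by push_cast; ring)
            by_cases hbg : β + γ = n
            · rw [ZhuAux.compL_same W (hbg ▸ hT)]
              exact INlem β (by omega) γ (by omega) _ hd' _ he
            · rw [ZhuAux.compL_ne W hT hbg]
              exact Submodule.zero_mem _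
          · obtain ⟨a, haV, rfl⟩ := hz
            obtain ⟨sa, hsa⟩ := ZhuAux.sum_compL W a
            have hab : W.mode a (-2) W.vacuum
                = ∑ β ∈ sa, W.mode (ZhuAux.compL W β a) (-2) W.vacuum := by
              conv_lhs => rw [← hsa]
              exact map_sum (ZhuAux.modeL W (-2) W.vacuum) (fun β => ZhuAux.compL W β a) sa
            rw [hab, map_sum]
            apply Submodule.sum_mem
            intro β _
            have hT : W.mode (ZhuAux.compL W β a) (-2) W.vacuum ∈ W.grade (β + 1) :=
              ZhuAux.mem_grade_mode W (ZhuAux.compL_mem W β a) W.vacuum_mem (by push_cast; ring)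
            by_cases hb1 : β + 1 = n
            · rw [ZhuAux.compL_same W (hb1 ▸ hT)]
              have hTc : W.mode (ZhuAux.compL W β a) (-2) W.vacuum
                  = W.circH β (ZhuAux.compL W β a) W.vacuum - (β:ℂ) • ZhuAux.compL W β a := by
                rw [ZhuAux.circH_vacuum W β (ZhuAux.compL W β a)]
                abel
              rw [hTc]
              apply Submodule.sub_mem
              · exact hOA (ZhuAux.circH_mem_O W (ZhuAux.compL_mem W β a) W.vacuum)
              · exact Submodule.smul_mem _ _ (IH β (by omega) _ (ZhuAux.compL_mem W β a))
            · rw [ZhuAux.compL_ne W hT hb1]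
              exact Submodule.zero_mem _
      have hres := haux2 x (hset hxV)
      rwa [ZhuAux.compL_same W hx] at hres
  obtain ⟨s, hs⟩ := ZhuAux.sum_compL W v
  rw [← hs]
  exact Submodule.sum_mem _ (fun β _ => main β _ (ZhuAux.compL_mem W β v))
end
end
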